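/- arXiv:0904.0328 — 12 statements merged into one kernel-verified Lean document; each statement's English description precedes it below -/
import Mathlib

section
/- Let α and β be finite types with |α| = n₁ and |β| = n₂. Then the sum, over all functions f : α → β, of the cardinality of the image of f equals n₂^(n₁+1) − n₂·(n₂−1)^(n₁). Equivalently, when β is nonempty, the average image size of a map from an n₁-element set to an n₂-element set is n₂·(1 − (1 − 1/n₂)^(n₁)). -/
/-! Double counting: `∑ f, #(image f) = ∑ b, #{f | b ∈ image f}`, and for each `b` exactly
`(n₂ - 1) ^ n₁` maps avoid `b`, so each summand on the right is `n₂ ^ n₁ - (n₂ - 1) ^ n₁`. -/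

open Finset

theorem Finset.sum_card_eq_sum_card_filter_mem {ι β : Type*} [Fintype ι] [Fintype β]
    (s : ι → Finset β) [∀ i b, Decidable (b ∈ s i)] :
    ∑ i, #(s i) = ∑ b, #{i | b ∈ s i} := by
  simpa only [bipartiteAbove, bipartiteBelow, filter_mem_eq_of_subset, subset_univ] using
    sum_card_bipartiteAbove_eq_sum_card_bipartiteBelow (s := univ) (t := univ)
      (fun i b => b ∈ s i)

section FunctionsHittingAPoint

variable {α β : Type*} [Fintype α] [Fintype β] [DecidableEq α] [DecidableEq β]

theorem card_fun_notMem_image (b : β) :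
    #{f : α → β | b ∉ univ.image f} = (Fintype.card β - 1) ^ Fintype.card α := by
  have avoiding_equiv : {f : α → β // b ∉ univ.image f} ≃ (α → {x : β // x ≠ b}) :=
    (Equiv.subtypeEquivRight fun f => by simp [eq_comm]).trans Equiv.subtypePiEquivPi
  rw [← Fintype.card_subtype, Fintype.card_congr avoiding_equiv, Fintype.card_fun,
    Fintype.card_subtype_compl, Fintype.card_subtype_eq]

theorem card_fun_mem_image (b : β) :
    (#{f : α → β | b ∈ univ.image f} : ℤ) =
      (Fintype.card β : ℤ) ^ Fintype.card α - ((Fintype.card β : ℤ) - 1) ^ Fintype.card α := by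
  have hit_add_miss := card_filter_add_card_filter_not (s := univ)
    (fun f : α → β => b ∈ univ.image f)
  rw [card_fun_notMem_image, card_univ, Fintype.card_fun] at hit_add_miss
  have hβ : 1 ≤ Fintype.card β := Fintype.card_pos_iff.mpr ⟨b⟩
  zify [hβ] at hit_add_miss
  linarith

end FunctionsHittingAPoint

theorem average_image_size (α β : Type*) [Fintype α] [Fintype β]
    [DecidableEq α] [DecidableEq β] (n₁ n₂ : ℕ)
    (h₁ : Fintype.card α = n₁) (h₂ : Fintype.card β = n₂) :
    ∑ f : α → β, ((Finset.univ.image f).card : ℤ) =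
      (n₂ : ℤ) ^ (n₁ + 1) - (n₂ : ℤ) * ((n₂ : ℤ) - 1) ^ n₁ := by
  subst h₁ h₂
  calc ∑ f : α → β, (#(univ.image f) : ℤ)
      = ∑ b : β, (#{f : α → β | b ∈ univ.image f} : ℤ) := by
        exact_mod_cast sum_card_eq_sum_card_filter_mem fun f : α → β => univ.image f
    _ = ∑ _b : β, ((Fintype.card β : ℤ) ^ Fintype.card α
          - ((Fintype.card β : ℤ) - 1) ^ Fintype.card α) :=
        sum_congr rfl fun b _ => card_fun_mem_image b
    _ = _ := by rw [sum_const, card_univ, nsmul_eq_mul]; ring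
end

section
/- For every m : ℕ one has F m ≠ 0; moreover if m is even then natDegree((F m).num) = natDegree((F m).denom), and if m is odd then natDegree((F m).num) = natDegree((F m).denom) + 1. -/
/-!
Write `F m = p / q` with polynomials `p, q` that need not be coprime, and watch `F m` near
`X = ∞`. `F 0` tends to `2 > 1`. If `F m` tends to a constant `c > 1`, then
`F (m + 1) = (F m - X) (F m - 1) / (F m)²` grows like `-(c - 1) / c² · X`, with a negative
leading coefficient; if `F m` grows like `c X` with `c < 0`, then `F (m + 1)` tends to
`(c - 1) / c > 1`. The degree of `F m` thus alternates between `0` and `1`, and `F m ≠ 0`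
because neither of `p`, `q` can vanish.
-/

noncomputable def F : ℕ → RatFunc ℚ
  | 0 => (2 * RatFunc.X) / (RatFunc.X + 1)
  | (m + 1) => ((F m - RatFunc.X) * (F m - 1)) / (F m) ^ 2

open Polynomial

theorem Polynomial.natDegree_sub_eq_of_leadingCoeff_ne {R : Type*} [Ring R] {p q : R[X]}
    (h : p.natDegree = q.natDegree) (hlc : p.leadingCoeff ≠ q.leadingCoeff) :
    (p - q).natDegree = p.natDegree := by
  refine le_antisymm ((natDegree_sub_le p q).trans (by rw [h, max_self])) ?_
  refine le_natDegree_of_ne_zero ?_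
  rwa [coeff_sub, sub_ne_zero, coeff_natDegree, h, coeff_natDegree]

section Shape

variable {R : Type*} [CommRing R]

/-- The numerator and denominator of `h_X (p / q)`, where `h_a(z) = (z - a)(z - 1) / z²`. -/
noncomputable def numDenStep (s : R[X] × R[X]) : R[X] × R[X] :=
  ((s.1 - X * s.2) * (s.1 - s.2), s.1 ^ 2)

variable [LinearOrder R]

/-- `p / q` has a finite limit `> 1` at infinity. -/
def EvenShape (p q : R[X]) : Prop :=
  p.natDegree = q.natDegree ∧ 0 < (p.leadingCoeff - q.leadingCoeff) * q.leadingCoeff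

/-- `p / q` has a simple pole at infinity with negative leading coefficient. -/
def OddShape (p q : R[X]) : Prop :=
  p.natDegree = q.natDegree + 1 ∧ p.leadingCoeff * q.leadingCoeff < 0

variable {p q : R[X]}

theorem OddShape.ne_zero (h : OddShape p q) : p ≠ 0 ∧ q ≠ 0 := by
  constructor <;> rintro rfl <;> simp [OddShape] at h

variable [IsStrictOrderedRing R]

theorem EvenShape.ne_zero (h : EvenShape p q) : p ≠ 0 ∧ q ≠ 0 := by
  constructor <;> rintro rfl
  · simp only [EvenShape, leadingCoeff_zero, zero_sub, neg_mul, neg_pos] at h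
    nlinarith [h.2, mul_self_nonneg q.leadingCoeff]
  · simp [EvenShape] at h

theorem EvenShape.numDenStep (h : EvenShape p q) :
    OddShape (numDenStep (p, q)).1 (numDenStep (p, q)).2 := by
  obtain ⟨hp, hq⟩ := h.ne_zero
  obtain ⟨hdeg, hlc⟩ := h
  have hXq : (X * q).natDegree = q.natDegree + 1 := by
    rw [natDegree_mul X_ne_zero hq, natDegree_X, add_comm]
  have hlt : p.degree < (X * q).degree := degree_lt_degree (by omega)
  have hab : p.leadingCoeff ≠ q.leadingCoeff := fun h ↦ by simp [h] at hlc
  have h₁ : p - X * q ≠ 0 := sub_ne_zero.2 (ne_of_apply_ne degree hlt.ne)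
  have h₂ : p - q ≠ 0 := sub_ne_zero.2 (ne_of_apply_ne leadingCoeff hab)
  refine ⟨?_, ?_⟩
  · rw [_root_.numDenStep, natDegree_mul h₁ h₂, natDegree_pow,
      natDegree_sub_eq_right_of_natDegree_lt (by omega),
      natDegree_sub_eq_of_leadingCoeff_ne hdeg hab, hXq, hdeg]
    ring
  · rw [_root_.numDenStep, leadingCoeff_mul, leadingCoeff_pow, leadingCoeff_sub_of_degree_lt' hlt,
      leadingCoeff_sub_of_degree_eq (by rw [degree_eq_natDegree hp, degree_eq_natDegree hq, hdeg])
        hab, leadingCoeff_mul, leadingCoeff_X, one_mul]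
    nlinarith [mul_pos hlc (sq_pos_of_ne_zero (leadingCoeff_ne_zero.2 hp))]

theorem OddShape.numDenStep (h : OddShape p q) :
    EvenShape (numDenStep (p, q)).1 (numDenStep (p, q)).2 := by
  obtain ⟨hp, hq⟩ := h.ne_zero
  obtain ⟨hdeg, hlc⟩ := h
  have hXq : (X * q).natDegree = p.natDegree := by
    rw [natDegree_mul X_ne_zero hq, natDegree_X, hdeg, add_comm]
  have hlt : q.degree < p.degree := degree_lt_degree (by omega)
  have hab : p.leadingCoeff ≠ (X * q).leadingCoeff := by
    rw [leadingCoeff_mul, leadingCoeff_X, one_mul]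
    intro h
    nlinarith [h ▸ hlc, sq_nonneg q.leadingCoeff]
  have h₁ : p - X * q ≠ 0 := sub_ne_zero.2 (ne_of_apply_ne leadingCoeff hab)
  have h₂ : p - q ≠ 0 := sub_ne_zero.2 (ne_of_apply_ne degree hlt.ne')
  refine ⟨?_, ?_⟩
  · rw [_root_.numDenStep, natDegree_mul h₁ h₂, natDegree_pow,
      natDegree_sub_eq_left_of_natDegree_lt (q := q) (by omega),
      natDegree_sub_eq_of_leadingCoeff_ne hXq.symm hab]
    ring
  · rw [_root_.numDenStep, leadingCoeff_mul, leadingCoeff_pow, leadingCoeff_sub_of_degree_lt hlt,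
      leadingCoeff_sub_of_degree_eq (by rw [degree_eq_natDegree hp, degree_eq_natDegree
        (mul_ne_zero X_ne_zero hq), hXq]) hab, leadingCoeff_mul, leadingCoeff_X, one_mul]
    nlinarith [mul_pos (neg_pos.2 hlc) (sq_pos_of_ne_zero (leadingCoeff_ne_zero.2 hp))]

end Shape

theorem RatFunc.intDegree_algebraMap_div {K : Type*} [Field K] {p q : K[X]} (hp : p ≠ 0)
    (hq : q ≠ 0) :
    (algebraMap K[X] (RatFunc K) p / algebraMap K[X] (RatFunc K) q).intDegree =
      p.natDegree - q.natDegree := by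
  rw [div_eq_mul_inv, intDegree_mul (algebraMap_ne_zero hp) (inv_ne_zero (algebraMap_ne_zero hq)),
    intDegree_inv, intDegree_polynomial, intDegree_polynomial, sub_eq_add_neg]

noncomputable def numDen (m : ℕ) : ℚ[X] × ℚ[X] :=
  numDenStep^[m] (2 * X, X + 1)

theorem numDen_succ (m : ℕ) : numDen (m + 1) = numDenStep (numDen m) :=
  Function.iterate_succ_apply' ..

theorem numDen_shape (k : ℕ) :
    EvenShape (numDen (2 * k)).1 (numDen (2 * k)).2 ∧
      OddShape (numDen (2 * k + 1)).1 (numDen (2 * k + 1)).2 := by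
  induction k with
  | zero =>
    have h : EvenShape (C 2 * X : ℚ[X]) (X + C 1) := by
      simp only [EvenShape, natDegree_X_add_C, leadingCoeff_C_mul_X, leadingCoeff_X_add_C]
      norm_num
    rw [C_1, map_ofNat C] at h
    exact ⟨h, numDen_succ 0 ▸ h.numDenStep⟩
  | succ k ih =>
    have h := numDen_succ (2 * k + 1) ▸ ih.2.numDenStep
    exact ⟨h, numDen_succ _ ▸ h.numDenStep⟩

theorem numDen_ne_zero (m : ℕ) : (numDen m).1 ≠ 0 ∧ (numDen m).2 ≠ 0 := by
  obtain ⟨k, rfl | rfl⟩ := Nat.even_or_odd' m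
  exacts [(numDen_shape k).1.ne_zero, (numDen_shape k).2.ne_zero]

theorem F_eq_div_numDen (m : ℕ) :
    F m = algebraMap ℚ[X] (RatFunc ℚ) (numDen m).1 / algebraMap ℚ[X] (RatFunc ℚ) (numDen m).2 := by
  induction m with
  | zero => simp [F, numDen, RatFunc.algebraMap_X, map_ofNat]
  | succ m ih =>
    obtain ⟨hp, hq⟩ := numDen_ne_zero m
    have hP := RatFunc.algebraMap_ne_zero hp
    have hQ := RatFunc.algebraMap_ne_zero hq
    rw [F, ih, numDen_succ, numDenStep, ← RatFunc.algebraMap_X]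
    simp only [map_mul, map_sub, map_pow]
    field_simp

theorem F_ne_zero_and_degrees (m : ℕ) :
    F m ≠ 0 ∧
    (Even m → (F m).num.natDegree = (F m).denom.natDegree) ∧
    (Odd m → (F m).num.natDegree = (F m).denom.natDegree + 1) := by
  obtain ⟨hp, hq⟩ := numDen_ne_zero m
  have hdeg : ((F m).num.natDegree : ℤ) - (F m).denom.natDegree =
      (numDen m).1.natDegree - (numDen m).2.natDegree := by
    change (F m).intDegree = _
    rw [F_eq_div_numDen, RatFunc.intDegree_algebraMap_div hp hq]
  refine ⟨?_, ?_, ?_⟩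
  · rw [F_eq_div_numDen]
    exact div_ne_zero (RatFunc.algebraMap_ne_zero hp) (RatFunc.algebraMap_ne_zero hq)
  · intro hm
    obtain ⟨k, rfl⟩ := even_iff_two_dvd.1 hm
    have := (numDen_shape k).1.1
    omega
  · rintro ⟨k, rfl⟩
    have := (numDen_shape k).2.1
    omega
end

section
/- For every m : ℕ: if m is even then the leading coefficient of (F m).num is a rational number ≥ 2, and if m is odd then the leading coefficient of (F m).num lies strictly between −1 and 0. -/
/-!
Write `F m = p / q` with `q` monic. Then `F (m + 1) = (p - X q)(p - q) / p²`; this fraction need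
not be reduced, but the leading coefficient of the reduced numerator is still the quotient of the
leading coefficients, and the degree difference is unchanged. If `deg p = deg q` and
`lc p = c ≥ 2`, the new degree difference is `1` and the new leading coefficient is
`-(c - 1) / c² ∈ (-1, 0)`; if `deg p = deg q + 1` and `lc p = c ∈ (-1, 0)`, the new degree
difference is `0` and the new leading coefficient is `(c - 1) / c = 1 - 1 / c > 2`.
-/

open Polynomial

namespace Polynomial

variable {R : Type*} [Ring R] {p q : R[X]}

theorem natDegree_sub_eq_left_of_leadingCoeff_ne (hd : p.natDegree = q.natDegree)
    (hlc : p.leadingCoeff ≠ q.leadingCoeff) : (p - q).natDegree = p.natDegree := by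
  have hcoeff : (p - q).coeff p.natDegree ≠ 0 := by
    rw [coeff_sub, coeff_natDegree, hd, coeff_natDegree]
    exact sub_ne_zero_of_ne hlc
  refine le_antisymm ?_ (le_natDegree_of_ne_zero hcoeff)
  exact (natDegree_sub_le p q).trans (by rw [hd, max_self])

theorem leadingCoeff_sub_of_natDegree_eq (hd : p.natDegree = q.natDegree)
    (hlc : p.leadingCoeff ≠ q.leadingCoeff) :
    (p - q).leadingCoeff = p.leadingCoeff - q.leadingCoeff := by
  rw [leadingCoeff, natDegree_sub_eq_left_of_leadingCoeff_ne hd hlc, coeff_sub, coeff_natDegree,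
    hd, coeff_natDegree]

end Polynomial

namespace RatFunc

variable {K : Type*} [Field K]

theorem num_leadingCoeff_of_eq_div {x : RatFunc K} {A B : K[X]} (hB : B ≠ 0)
    (h : x = algebraMap _ _ A / algebraMap _ _ B) :
    x.num.leadingCoeff = A.leadingCoeff / B.leadingCoeff := by
  have key : x.num * B = A * x.denom := (num_mul_eq_mul_denom_iff hB).mpr h
  have := congrArg leadingCoeff key
  rw [leadingCoeff_mul, leadingCoeff_mul, x.monic_denom.leadingCoeff, mul_one] at this
  rw [← this, mul_div_cancel_right₀ _ (leadingCoeff_ne_zero.mpr hB)]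

theorem intDegree_of_eq_div {x : RatFunc K} {A B : K[X]} (hA : A ≠ 0) (hB : B ≠ 0)
    (h : x = algebraMap _ _ A / algebraMap _ _ B) :
    x.intDegree = A.natDegree - B.natDegree := by
  rw [h, intDegree_div (algebraMap_ne_zero hA) (algebraMap_ne_zero hB), intDegree_polynomial,
    intDegree_polynomial]

end RatFunc

/-- The paper's `h_a`. -/
def quadMap {K : Type*} [Field K] (a z : K) : K := (z - a) * (z - 1) / z ^ 2

theorem F_succ (m : ℕ) : F (m + 1) = quadMap RatFunc.X (F m) := rfl

section quadMap

variable {K : Type*} [Field K]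

theorem quadMap_X_eq_div {x : RatFunc K} (hx : x ≠ 0) :
    quadMap RatFunc.X x =
      algebraMap K[X] (RatFunc K) ((x.num - Polynomial.X * x.denom) * (x.num - x.denom)) /
        algebraMap K[X] (RatFunc K) (x.num ^ 2) := by
  have hnum : algebraMap K[X] (RatFunc K) x.num ≠ 0 :=
    RatFunc.algebraMap_ne_zero (RatFunc.num_ne_zero hx)
  have hdenom : algebraMap K[X] (RatFunc K) x.denom ≠ 0 :=
    RatFunc.algebraMap_ne_zero x.denom_ne_zero
  conv_lhs => rw [← RatFunc.num_div_denom x]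
  simp only [quadMap, map_mul, map_sub, map_pow, RatFunc.algebraMap_X]
  field_simp

theorem quadMap_X_of_intDegree_eq_zero {x : RatFunc K} (hx : x ≠ 0) (hdeg : x.intDegree = 0)
    (hc : x.num.leadingCoeff ≠ 1) :
    (quadMap RatFunc.X x).intDegree = 1 ∧
      (quadMap RatFunc.X x).num.leadingCoeff =
        -(x.num.leadingCoeff - 1) / x.num.leadingCoeff ^ 2 := by
  have hpq : x.num.natDegree = x.denom.natDegree := by
    simp only [RatFunc.intDegree] at hdeg; omega
  set p := x.num
  set q := x.denom
  have hp : p ≠ 0 := RatFunc.num_ne_zero hx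
  have hXq : (X * q).natDegree = q.natDegree + 1 := by
    rw [natDegree_mul X_ne_zero x.denom_ne_zero, natDegree_X, add_comm]
  have hlt : p.degree < (X * q).degree := degree_lt_degree (by omega)
  have hlcq : q.leadingCoeff = 1 := x.monic_denom.leadingCoeff
  have lc₁ : (p - X * q).leadingCoeff = -1 := by
    rw [leadingCoeff_sub_of_degree_lt' hlt, leadingCoeff_mul, leadingCoeff_X, hlcq, one_mul]
  have lc₂ : (p - q).leadingCoeff = p.leadingCoeff - 1 := by
    rw [leadingCoeff_sub_of_natDegree_eq hpq (by rwa [hlcq]), hlcq]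
  have deg₁ : (p - X * q).natDegree = q.natDegree + 1 := by
    rw [natDegree_sub_eq_right_of_natDegree_lt (natDegree_lt_natDegree_iff hp |>.mpr hlt), hXq]
  have deg₂ : (p - q).natDegree = p.natDegree :=
    natDegree_sub_eq_left_of_leadingCoeff_ne hpq (by rwa [hlcq])
  have h₁ : p - X * q ≠ 0 := fun h => by simp [h] at lc₁
  have h₂ : p - q ≠ 0 := fun h => hc (by rw [← sub_eq_zero, ← lc₂, h, leadingCoeff_zero])
  have heq := quadMap_X_eq_div hx
  refine ⟨?_, ?_⟩
  · rw [RatFunc.intDegree_of_eq_div (mul_ne_zero h₁ h₂) (pow_ne_zero 2 hp) heq,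
      natDegree_mul h₁ h₂, natDegree_pow, deg₁, deg₂, hpq]
    push_cast; ring
  · rw [RatFunc.num_leadingCoeff_of_eq_div (pow_ne_zero 2 hp) heq, leadingCoeff_mul,
      leadingCoeff_pow, lc₁, lc₂, neg_one_mul]

theorem quadMap_X_of_intDegree_eq_one {x : RatFunc K} (hx : x ≠ 0) (hdeg : x.intDegree = 1)
    (hc : x.num.leadingCoeff ≠ 1) :
    (quadMap RatFunc.X x).intDegree = 0 ∧
      (quadMap RatFunc.X x).num.leadingCoeff = (x.num.leadingCoeff - 1) / x.num.leadingCoeff := by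
  have hpq : x.num.natDegree = x.denom.natDegree + 1 := by
    simp only [RatFunc.intDegree] at hdeg; omega
  set p := x.num
  set q := x.denom
  have hp : p ≠ 0 := RatFunc.num_ne_zero hx
  have hXq : (X * q).natDegree = p.natDegree := by
    rw [natDegree_mul X_ne_zero x.denom_ne_zero, natDegree_X, add_comm, hpq]
  have hlt : q.degree < p.degree := degree_lt_degree (by omega)
  have hlcq : q.leadingCoeff = 1 := x.monic_denom.leadingCoeff
  have hlcXq : (X * q).leadingCoeff = 1 := by rw [leadingCoeff_mul, leadingCoeff_X, hlcq, one_mul]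
  have lc₁ : (p - X * q).leadingCoeff = p.leadingCoeff - 1 := by
    rw [leadingCoeff_sub_of_natDegree_eq hXq.symm (by rwa [hlcXq]), hlcXq]
  have lc₂ : (p - q).leadingCoeff = p.leadingCoeff := leadingCoeff_sub_of_degree_lt hlt
  have deg₁ : (p - X * q).natDegree = p.natDegree :=
    natDegree_sub_eq_left_of_leadingCoeff_ne hXq.symm (by rwa [hlcXq])
  have deg₂ : (p - q).natDegree = p.natDegree :=
    natDegree_sub_eq_left_of_natDegree_lt (by omega)
  have hc₀ : p.leadingCoeff ≠ 0 := leadingCoeff_ne_zero.mpr hp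
  have h₁ : p - X * q ≠ 0 := fun h =>
    hc (by rw [← sub_eq_zero, ← lc₁, h, leadingCoeff_zero])
  have h₂ : p - q ≠ 0 := fun h => hc₀ (by rw [← lc₂, h, leadingCoeff_zero])
  have heq := quadMap_X_eq_div hx
  refine ⟨?_, ?_⟩
  · rw [RatFunc.intDegree_of_eq_div (mul_ne_zero h₁ h₂) (pow_ne_zero 2 hp) heq,
      natDegree_mul h₁ h₂, natDegree_pow, deg₁, deg₂]
    push_cast; ring
  · rw [RatFunc.num_leadingCoeff_of_eq_div (pow_ne_zero 2 hp) heq, leadingCoeff_mul,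
      leadingCoeff_pow, lc₁, lc₂]
    field_simp

end quadMap

theorem F_zero_intDegree_and_leadingCoeff :
    (F 0).intDegree = 0 ∧ (F 0).num.leadingCoeff = 2 := by
  have hA : (C 2 * X : ℚ[X]) ≠ 0 := mul_ne_zero (C_ne_zero.mpr two_ne_zero) X_ne_zero
  have hB : (X + C 1 : ℚ[X]) ≠ 0 := X_add_C_ne_zero 1
  have h : F 0 =
      algebraMap ℚ[X] (RatFunc ℚ) (C 2 * X) / algebraMap ℚ[X] (RatFunc ℚ) (X + C 1) := by
    simp [F, RatFunc.algebraMap_X]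
  rw [RatFunc.intDegree_of_eq_div hA hB h, RatFunc.num_leadingCoeff_of_eq_div hB h,
    natDegree_C_mul_X 2 two_ne_zero, natDegree_X_add_C, leadingCoeff_C_mul_X,
    leadingCoeff_X_add_C, div_one]
  norm_num

theorem F_succ_of_intDegree_eq_zero {m : ℕ} (hdeg : (F m).intDegree = 0)
    (hc : 2 ≤ (F m).num.leadingCoeff) :
    (F (m + 1)).intDegree = 1 ∧
      -1 < (F (m + 1)).num.leadingCoeff ∧ (F (m + 1)).num.leadingCoeff < 0 := by
  set c := (F m).num.leadingCoeff with hc_def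
  have hx : F m ≠ 0 := fun h => by norm_num [c, h] at hc
  obtain ⟨hdeg', hlc⟩ := quadMap_X_of_intDegree_eq_zero hx hdeg (by linarith)
  rw [F_succ, hdeg', hlc, ← hc_def]
  have hc2 : 0 < c ^ 2 := by positivity
  refine ⟨rfl, ?_, ?_⟩
  · rw [lt_div_iff₀ hc2]; nlinarith
  · exact div_neg_of_neg_of_pos (by linarith) hc2

theorem F_succ_of_intDegree_eq_one {m : ℕ} (hdeg : (F m).intDegree = 1)
    (hc : -1 < (F m).num.leadingCoeff) (hc' : (F m).num.leadingCoeff < 0) :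
    (F (m + 1)).intDegree = 0 ∧ 2 ≤ (F (m + 1)).num.leadingCoeff := by
  set c := (F m).num.leadingCoeff with hc_def
  have hx : F m ≠ 0 := fun h => by simp [c, h] at hc'
  obtain ⟨hdeg', hlc⟩ := quadMap_X_of_intDegree_eq_one hx hdeg (by linarith)
  rw [F_succ, hdeg', hlc, ← hc_def]
  exact ⟨rfl, by rw [le_div_iff_of_neg hc']; linarith⟩

theorem F_two_mul (k : ℕ) : (F (2 * k)).intDegree = 0 ∧ 2 ≤ (F (2 * k)).num.leadingCoeff := by
  induction k with
  | zero => exact ⟨F_zero_intDegree_and_leadingCoeff.1, F_zero_intDegree_and_leadingCoeff.2.ge⟩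
  | succ k ih =>
    obtain ⟨hdeg, hlo, hhi⟩ := F_succ_of_intDegree_eq_zero ih.1 ih.2
    exact F_succ_of_intDegree_eq_one hdeg hlo hhi

theorem F_num_leadingCoeff (m : ℕ) :
    (Even m → 2 ≤ (F m).num.leadingCoeff) ∧
    (Odd m → -1 < (F m).num.leadingCoeff ∧ (F m).num.leadingCoeff < 0) := by
  refine ⟨?_, ?_⟩
  · rintro ⟨k, rfl⟩
    rw [← two_mul]
    exact (F_two_mul k).2
  · rintro ⟨k, rfl⟩
    exact (F_succ_of_intDegree_eq_zero (F_two_mul k).1 (F_two_mul k).2).2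
end

section
/- For every m : ℕ: the polynomial X divides (F m).num if and only if m ≡ 0 (mod 3); X divides (F m).denom if and only if m ≡ 1 (mod 3); and X divides (F m).num − (F m).denom if and only if m ≡ 2 (mod 3). -/
open scoped Polynomial

namespace RatFunc

variable {k : Type*} [Field k]

def HasValueAtZero (G : RatFunc k) (v : k) : Prop :=
  ∃ p q : k[X], q.eval 0 ≠ 0 ∧
    G = algebraMap k[X] (RatFunc k) p / algebraMap k[X] (RatFunc k) q ∧ v = p.eval 0 / q.eval 0

theorem algebraMap_ne_zero_of_eval_ne_zero {q : k[X]} {a : k} (hq : q.eval a ≠ 0) :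
    algebraMap k[X] (RatFunc k) q ≠ 0 :=
  algebraMap_ne_zero (by rintro rfl; simp at hq)

theorem hasValueAtZero_algebraMap (p : k[X]) :
    HasValueAtZero (algebraMap k[X] (RatFunc k) p) (p.eval 0) :=
  ⟨p, 1, by simp, by simp, by simp⟩

theorem hasValueAtZero_one : HasValueAtZero (1 : RatFunc k) 1 := by
  simpa using hasValueAtZero_algebraMap (1 : k[X])

theorem hasValueAtZero_X : HasValueAtZero (X : RatFunc k) 0 := by
  simpa using hasValueAtZero_algebraMap (Polynomial.X : k[X])

namespace HasValueAtZero

variable {G H : RatFunc k} {v w : k}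

theorem add (hG : HasValueAtZero G v) (hH : HasValueAtZero H w) :
    HasValueAtZero (G + H) (v + w) := by
  obtain ⟨p, q, hq, rfl, rfl⟩ := hG
  obtain ⟨p', q', hq', rfl, rfl⟩ := hH
  have hqK := algebraMap_ne_zero_of_eval_ne_zero hq
  have hqK' := algebraMap_ne_zero_of_eval_ne_zero hq'
  refine ⟨p * q' + q * p', q * q', by simp [hq, hq'], ?_, ?_⟩
  · simp only [map_add, map_mul]
    field_simp
  · simp only [Polynomial.eval_add, Polynomial.eval_mul]
    field_simp

theorem mul (hG : HasValueAtZero G v) (hH : HasValueAtZero H w) :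
    HasValueAtZero (G * H) (v * w) := by
  obtain ⟨p, q, hq, rfl, rfl⟩ := hG
  obtain ⟨p', q', hq', rfl, rfl⟩ := hH
  refine ⟨p * p', q * q', by simp [hq, hq'], ?_, ?_⟩
  · simp only [map_mul, mul_div_mul_comm]
  · simp only [Polynomial.eval_mul, mul_div_mul_comm]

theorem neg (hG : HasValueAtZero G v) : HasValueAtZero (-G) (-v) := by
  obtain ⟨p, q, hq, rfl, rfl⟩ := hG
  exact ⟨-p, q, hq, by simp [neg_div], by simp [neg_div]⟩

theorem inv (hG : HasValueAtZero G v) (hv : v ≠ 0) : HasValueAtZero G⁻¹ v⁻¹ := by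
  obtain ⟨p, q, hq, rfl, rfl⟩ := hG
  exact ⟨q, p, (div_ne_zero_iff.mp hv).1, by simp, by simp⟩

theorem sub (hG : HasValueAtZero G v) (hH : HasValueAtZero H w) :
    HasValueAtZero (G - H) (v - w) := by
  simpa only [sub_eq_add_neg] using hG.add hH.neg

theorem div (hG : HasValueAtZero G v) (hH : HasValueAtZero H w) (hw : w ≠ 0) :
    HasValueAtZero (G / H) (v / w) := by
  simpa only [div_eq_mul_inv] using hG.mul (hH.inv hw)

theorem pow (hG : HasValueAtZero G v) (n : ℕ) : HasValueAtZero (G ^ n) (v ^ n) := by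
  induction n with
  | zero => simpa using hasValueAtZero_one
  | succ n ih => simpa only [pow_succ] using ih.mul hG

theorem unique (hv : HasValueAtZero G v) (hw : HasValueAtZero G w) : v = w := by
  obtain ⟨p, q, hq, rfl, rfl⟩ := hv
  obtain ⟨p', q', hq', hpq, rfl⟩ := hw
  rw [div_eq_div_iff (algebraMap_ne_zero_of_eval_ne_zero hq)
    (algebraMap_ne_zero_of_eval_ne_zero hq'), ← map_mul, ← map_mul] at hpq
  rw [div_eq_div_iff hq hq', ← Polynomial.eval_mul, ← Polynomial.eval_mul,
    algebraMap_injective k hpq]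

theorem iff_eq (hG : HasValueAtZero G v) : HasValueAtZero G w ↔ w = v :=
  ⟨fun hw => hw.unique hG, fun hw => hw ▸ hG⟩

theorem ne_zero (hG : HasValueAtZero G v) (hv : v ≠ 0) : G ≠ 0 := by
  rintro rfl
  exact hv (hG.unique (by simpa using hasValueAtZero_algebraMap (0 : k[X])))

end HasValueAtZero

open Polynomial in
theorem eval_num_ne_zero_of_eval_denom_eq_zero {G : RatFunc k} (h : G.denom.eval 0 = 0) :
    G.num.eval 0 ≠ 0 := by
  intro hn
  rw [← coeff_zero_eq_eval_zero, ← X_dvd_iff] at h hn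
  exact not_isUnit_X (G.isCoprime_num_denom.isUnit_of_dvd' hn h)

variable {G : RatFunc k} {v : k}

theorem hasValueAtZero_iff :
    HasValueAtZero G v ↔ G.denom.eval 0 ≠ 0 ∧ v = G.num.eval 0 / G.denom.eval 0 := by
  refine ⟨fun ⟨p, q, hq, hG, hv⟩ => ?_,
    fun ⟨hd, hv⟩ => ⟨G.num, G.denom, hd, (num_div_denom G).symm, hv⟩⟩
  have hpq := congrArg (Polynomial.eval 0)
    ((num_mul_eq_mul_denom_iff (by rintro rfl; simp at hq)).mpr hG)
  simp only [Polynomial.eval_mul] at hpq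
  have hd : G.denom.eval 0 ≠ 0 := by
    intro hd
    rw [hd, mul_zero] at hpq
    exact eval_num_ne_zero_of_eval_denom_eq_zero hd ((mul_eq_zero.mp hpq).resolve_right hq)
  refine ⟨hd, ?_⟩
  rw [hv, div_eq_div_iff hq hd]
  linear_combination -hpq

theorem X_dvd_num_sub_C_mul_denom_iff :
    Polynomial.X ∣ G.num - Polynomial.C v * G.denom ↔ HasValueAtZero G v := by
  rw [Polynomial.X_dvd_iff, Polynomial.coeff_zero_eq_eval_zero, hasValueAtZero_iff,
    Polynomial.eval_sub, Polynomial.eval_mul, Polynomial.eval_C, sub_eq_zero]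
  constructor
  · intro h
    have hd : G.denom.eval 0 ≠ 0 := fun hd =>
      eval_num_ne_zero_of_eval_denom_eq_zero hd (by rw [h, hd, mul_zero])
    exact ⟨hd, by rw [h, mul_div_cancel_right₀ _ hd]⟩
  · rintro ⟨hd, rfl⟩
    field_simp

theorem X_dvd_num_iff : Polynomial.X ∣ G.num ↔ HasValueAtZero G 0 := by
  simpa using X_dvd_num_sub_C_mul_denom_iff (G := G) (v := 0)

theorem X_dvd_num_sub_denom_iff : Polynomial.X ∣ G.num - G.denom ↔ HasValueAtZero G 1 := by
  simpa using X_dvd_num_sub_C_mul_denom_iff (G := G) (v := 1)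

theorem X_dvd_denom_iff : Polynomial.X ∣ G.denom ↔ ∀ v, ¬HasValueAtZero G v := by
  simp only [Polynomial.X_dvd_iff, Polynomial.coeff_zero_eq_eval_zero, hasValueAtZero_iff]
  grind

/-- The paper's `h_a` with `a = X`, so that `F (m + 1) = quadMap (F m)` by definition. -/
noncomputable def quadMap (z : RatFunc k) : RatFunc k :=
  (z - X) * (z - 1) / z ^ 2

theorem hasValueAtZero_of_div_X (h : HasValueAtZero (G / X) v) : HasValueAtZero G 0 := by
  simpa [mul_div_cancel₀ G (X_ne_zero (K := k))] using hasValueAtZero_X.mul h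

theorem not_hasValueAtZero_of_X_mul (h : HasValueAtZero (X * G) v) (hv : v ≠ 0) (w : k) :
    ¬HasValueAtZero G w := fun hw => hv (h.unique (by simpa using hasValueAtZero_X.mul hw))

theorem hasValueAtZero_of_sub_one_div_X (h : HasValueAtZero ((G - 1) / X) v) :
    HasValueAtZero G 1 := by
  simpa [mul_div_cancel₀ (G - 1) (X_ne_zero (K := k))] using
    hasValueAtZero_one.add (hasValueAtZero_X.mul h)

theorem HasValueAtZero.X_mul_quadMap (h : HasValueAtZero (G / X) v) (hv : v ≠ 0) :
    HasValueAtZero (X * quadMap G) ((1 - v) / v ^ 2) := by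
  obtain ⟨u, rfl⟩ : ∃ u, G = X * u := ⟨G / X, (mul_div_cancel₀ G X_ne_zero).symm⟩
  rw [mul_div_cancel_left₀ u X_ne_zero] at h
  have key : X * quadMap (X * u) = (u - 1) * (X * u - 1) / u ^ 2 := by
    rw [quadMap]
    field_simp [X_ne_zero (K := k)]
  rw [key]
  convert ((h.sub hasValueAtZero_one).mul ((hasValueAtZero_X.mul h).sub hasValueAtZero_one)).div
    (h.pow 2) (pow_ne_zero 2 hv) using 1
  ring

theorem HasValueAtZero.quadMap_sub_one_div_X (h : HasValueAtZero (X * G) v) (hv : v ≠ 0) :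
    HasValueAtZero ((quadMap G - 1) / X) (-1 / v) := by
  obtain ⟨w, rfl⟩ : ∃ w, G = w / X := ⟨X * G, (mul_div_cancel_left₀ G X_ne_zero).symm⟩
  rw [mul_div_cancel₀ w X_ne_zero] at h
  have hw : w ≠ 0 := h.ne_zero hv
  have key : (quadMap (w / X) - 1) / X = (X ^ 2 - w - X * w) / w ^ 2 := by
    rw [quadMap]
    field_simp [X_ne_zero (K := k)]
    ring
  rw [key]
  convert (((hasValueAtZero_X.pow 2).sub h).sub (hasValueAtZero_X.mul h)).div (h.pow 2)
    (pow_ne_zero 2 hv) using 1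
  field_simp
  ring

theorem HasValueAtZero.quadMap_div_X (h : HasValueAtZero ((G - 1) / X) v) :
    HasValueAtZero (quadMap G / X) v := by
  obtain ⟨t, rfl⟩ : ∃ t, G = 1 + X * t :=
    ⟨(G - 1) / X, by rw [mul_div_cancel₀ _ X_ne_zero, add_sub_cancel]⟩
  rw [add_sub_cancel_left, mul_div_cancel_left₀ t X_ne_zero] at h
  have hG : HasValueAtZero (1 + X * t) 1 := by
    simpa using hasValueAtZero_one.add (hasValueAtZero_X.mul h)
  have key : quadMap (1 + X * t) / X = (1 + X * t - X) * t / (1 + X * t) ^ 2 := by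
    rw [quadMap]
    field_simp [X_ne_zero (K := k)]
    ring
  rw [key]
  convert ((hG.sub hasValueAtZero_X).mul h).div (hG.pow 2) (by simp) using 1
  simp

end RatFunc

open RatFunc

theorem hasValueAtZero_F_zero_div_X : HasValueAtZero (F 0 / X) 2 := by
  have hX1 : HasValueAtZero (X + 1 : RatFunc ℚ) 1 := by
    simpa using (hasValueAtZero_X (k := ℚ)).add hasValueAtZero_one
  have key : F 0 / X = 2 / (X + 1) := by
    rw [F]
    field_simp [X_ne_zero (K := ℚ), hX1.ne_zero one_ne_zero]
  rw [key]
  simpa [map_ofNat] using (hasValueAtZero_algebraMap (2 : ℚ[X])).div hX1 one_ne_zero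

theorem exists_one_lt_hasValueAtZero_F_three_mul_div_X (n : ℕ) :
    ∃ c : ℚ, 1 < c ∧ HasValueAtZero (F (3 * n) / X) c := by
  induction n with
  | zero => exact ⟨2, one_lt_two, hasValueAtZero_F_zero_div_X⟩
  | succ n ih =>
    obtain ⟨c, hc, h⟩ := ih
    have hc0 : c ≠ 0 := by positivity
    have hb : (1 - c) / c ^ 2 < 0 := div_neg_of_neg_of_pos (by linarith) (by positivity)
    refine ⟨-1 / ((1 - c) / c ^ 2), ?_,
      ((h.X_mul_quadMap hc0).quadMap_sub_one_div_X hb.ne).quadMap_div_X⟩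
    rw [lt_div_iff_of_neg hb, one_mul, lt_div_iff₀ (by positivity)]
    nlinarith

theorem hasValueAtZero_F_three_mul (n : ℕ) : HasValueAtZero (F (3 * n)) 0 := by
  obtain ⟨c, -, h⟩ := exists_one_lt_hasValueAtZero_F_three_mul_div_X n
  exact hasValueAtZero_of_div_X h

theorem not_hasValueAtZero_F_three_mul_add_one (n : ℕ) (v : ℚ) :
    ¬HasValueAtZero (F (3 * n + 1)) v := by
  obtain ⟨c, hc, h⟩ := exists_one_lt_hasValueAtZero_F_three_mul_div_X n
  exact not_hasValueAtZero_of_X_mul (h.X_mul_quadMap (by positivity))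
    (div_ne_zero (by linarith) (by positivity)) v

theorem hasValueAtZero_F_three_mul_add_two (n : ℕ) : HasValueAtZero (F (3 * n + 2)) 1 := by
  obtain ⟨c, hc, h⟩ := exists_one_lt_hasValueAtZero_F_three_mul_div_X n
  have hb : (1 - c) / c ^ 2 ≠ 0 := div_ne_zero (by linarith) (by positivity)
  exact hasValueAtZero_of_sub_one_div_X
    ((h.X_mul_quadMap (by positivity)).quadMap_sub_one_div_X hb)

theorem X_dvd_F_num_denom (m : ℕ) :
    (Polynomial.X ∣ (F m).num ↔ m % 3 = 0) ∧
    (Polynomial.X ∣ (F m).denom ↔ m % 3 = 1) ∧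
    (Polynomial.X ∣ ((F m).num - (F m).denom) ↔ m % 3 = 2) := by
  rw [X_dvd_num_iff, X_dvd_denom_iff, X_dvd_num_sub_denom_iff]
  obtain ⟨n, r, hr, rfl⟩ : ∃ n r, r < 3 ∧ m = 3 * n + r :=
    ⟨m / 3, m % 3, Nat.mod_lt m three_pos, (Nat.div_add_mod m 3).symm⟩
  interval_cases r
  · simp [(hasValueAtZero_F_three_mul n).iff_eq]
  · simp [not_hasValueAtZero_F_three_mul_add_one]
  · simp [(hasValueAtZero_F_three_mul_add_two n).iff_eq]
end

section
/- For every m : ℕ, 21·natDegree((F m).num − X·(F m).denom) = 23·2^m + s(m), as an identity in ℤ, where s(m) = 19, −4, 13, 5, 10, −1 according as m ≡ 0, 1, 2, 3, 4, 5 (mod 6). (Equivalently, the degree of p_m − a·q_m equals a_m + 1 if m is even and a_m if m is odd, where a_m = deg p_m.) -/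
/-!
Write `F m = p / q` in lowest terms. Then `F (m + 1) = (p - X q) (p - q) / p ^ 2`, and this is
again in lowest terms unless `X ∣ p`. Following the critical orbit `0 ↦ ∞ ↦ 1 ↦ 0` of `h_0`, this
happens exactly when `3 ∣ m`, and then exactly one factor `X` cancels. At infinity `p / q`
alternately tends to a constant `≠ 0, 1` and grows like `λ a` with `λ ≠ 1` (the first transition
uses the irrationality of the golden ratio). Hence `deg (p - X q) = deg q + 1` and
`deg p_(m+1) = 2 deg p_m + (m + 1) % 2 - [3 ∣ m]`, and the closed form is checked modulo 6.
-/

open Polynomial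

section Generic

variable {R : Type*} [CommRing R]

theorem natDegree_sub_of_coeff_ne {r s : R[X]} {n : ℕ} (hr : r.natDegree ≤ n)
    (hs : s.natDegree ≤ n) (h : r.coeff n ≠ s.coeff n) : (r - s).natDegree = n :=
  le_antisymm ((natDegree_sub_le r s).trans (max_le hr hs))
    (le_natDegree_of_ne_zero (by rwa [coeff_sub, sub_ne_zero]))

theorem leadingCoeff_sub_of_coeff_ne {r s : R[X]} {n : ℕ} (hr : r.natDegree ≤ n)
    (hs : s.natDegree ≤ n) (h : r.coeff n ≠ s.coeff n) :
    (r - s).leadingCoeff = r.coeff n - s.coeff n := by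
  rw [leadingCoeff, natDegree_sub_of_coeff_ne hr hs h, coeff_sub]

theorem isCoprime_sub_left_self {x y : R} : IsCoprime (y - x) y ↔ IsCoprime x y := by
  rw [show y - x = -(x - y * 1) by ring, IsCoprime.neg_left_iff, IsCoprime.sub_mul_left_left_iff]

end Generic

theorem RatFunc.exists_num_denom_eq_C_mul {K : Type*} [Field K] {p q : K[X]} (hq : q ≠ 0)
    (hpq : IsCoprime p q) :
    ∃ c : K, c ≠ 0 ∧ (algebraMap K[X] (RatFunc K) p / algebraMap _ _ q).num = Polynomial.C c * p ∧
      (algebraMap K[X] (RatFunc K) p / algebraMap _ _ q).denom = Polynomial.C c * q := by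
  set x := algebraMap K[X] (RatFunc K) p / algebraMap _ _ q
  have hcross : x.num * q = p * x.denom := (RatFunc.num_mul_eq_mul_denom_iff hq).mpr rfl
  have hq_dvd : q ∣ x.denom := hpq.symm.dvd_of_dvd_mul_left ⟨x.num, by rw [← hcross, mul_comm]⟩
  obtain ⟨u, hu⟩ := associated_of_dvd_dvd hq_dvd (RatFunc.denom_div_dvd p q)
  obtain ⟨c, hc, hcu⟩ := Polynomial.isUnit_iff.mp u.isUnit
  refine ⟨c, hc.ne_zero, mul_right_cancel₀ hq ?_, by rw [← hu, ← hcu, mul_comm]⟩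
  rw [hcross, ← hu, ← hcu]
  ring

section Shape

variable {K : Type*} [Field K]

/-- At infinity `p / q` tends to a constant other than `0, 1` (`ε = 0`), or grows like `λ a` with
`λ ≠ 1` (`ε = 1`). -/
structure ShapeAtInfinity (ε : ℕ) (p q : K[X]) : Prop where
  left_ne_zero : p ≠ 0
  right_ne_zero : q ≠ 0
  natDegree_eq : p.natDegree = q.natDegree + ε
  leadingCoeff_ne : p.leadingCoeff ≠ q.leadingCoeff

namespace ShapeAtInfinity

variable {ε : ℕ} {p q : K[X]}

theorem of_X_mul (h : ShapeAtInfinity ε (X * p) (X * q)) : ShapeAtInfinity ε p q := by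
  obtain ⟨hp, hq, hdeg, hlc⟩ := h
  have hp : p ≠ 0 := right_ne_zero_of_mul hp
  have hq : q ≠ 0 := right_ne_zero_of_mul hq
  refine ⟨hp, hq, ?_, ?_⟩
  · rw [natDegree_X_mul hp, natDegree_X_mul hq] at hdeg
    omega
  · simpa only [leadingCoeff_mul, leadingCoeff_X, one_mul] using hlc

theorem coeff_natDegree_add_one_ne (h : ShapeAtInfinity ε p q) (hε : ε ≤ 1) :
    p.coeff (q.natDegree + 1) ≠ (X * q).coeff (q.natDegree + 1) := by
  obtain ⟨-, hq, hdeg, hlc⟩ := h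
  rw [coeff_X_mul, coeff_natDegree]
  obtain rfl | rfl : ε = 0 ∨ ε = 1 := by omega
  · rw [coeff_eq_zero_of_natDegree_lt (by omega)]
    exact (leadingCoeff_ne_zero.mpr hq).symm
  · rwa [← hdeg, coeff_natDegree]

theorem coeff_natDegree_ne (h : ShapeAtInfinity ε p q) (hε : ε ≤ 1) :
    p.leadingCoeff ≠ q.coeff p.natDegree := by
  obtain ⟨hp, -, hdeg, hlc⟩ := h
  obtain rfl | rfl : ε = 0 ∨ ε = 1 := by omega
  · rwa [hdeg, add_zero, coeff_natDegree]
  · rw [coeff_eq_zero_of_natDegree_lt (by omega)]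
    exact leadingCoeff_ne_zero.mpr hp

theorem natDegree_sub_X_mul (h : ShapeAtInfinity ε p q) (hε : ε ≤ 1) :
    (p - X * q).natDegree = q.natDegree + 1 :=
  natDegree_sub_of_coeff_ne (by rw [h.natDegree_eq]; omega)
    (natDegree_X_mul h.right_ne_zero).le (h.coeff_natDegree_add_one_ne hε)

theorem leadingCoeff_sub_X_mul (h : ShapeAtInfinity ε p q) (hε : ε ≤ 1) :
    (p - X * q).leadingCoeff = p.coeff (q.natDegree + 1) - q.leadingCoeff := by
  rw [leadingCoeff_sub_of_coeff_ne (by rw [h.natDegree_eq]; omega)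
    (natDegree_X_mul h.right_ne_zero).le (h.coeff_natDegree_add_one_ne hε), coeff_X_mul,
    coeff_natDegree]

theorem natDegree_sub (h : ShapeAtInfinity ε p q) (hε : ε ≤ 1) :
    (p - q).natDegree = p.natDegree :=
  natDegree_sub_of_coeff_ne le_rfl (by rw [h.natDegree_eq]; omega) (h.coeff_natDegree_ne hε)

theorem leadingCoeff_sub (h : ShapeAtInfinity ε p q) (hε : ε ≤ 1) :
    (p - q).leadingCoeff = p.leadingCoeff - q.coeff p.natDegree :=
  leadingCoeff_sub_of_coeff_ne le_rfl (by rw [h.natDegree_eq]; omega) (h.coeff_natDegree_ne hε)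

end ShapeAtInfinity

end Shape

theorem sq_add_mul_sub_sq_ne_zero {u v : ℚ} (hv : v ≠ 0) : u ^ 2 + u * v - v ^ 2 ≠ 0 := by
  intro h
  have h5 : IsSquare ((5 : ℕ) : ℚ) :=
    ⟨(2 * u + v) / v, by field_simp; linear_combination (-4) * h⟩
  rw [Rat.isSquare_natCast_iff] at h5
  exact (by norm_num : Nat.Prime 5).not_isSquare h5

theorem ShapeAtInfinity.step {ε : ℕ} {p q : ℚ[X]} (h : ShapeAtInfinity ε p q) (hε : ε ≤ 1) :
    ShapeAtInfinity (1 - ε) ((p - X * q) * (p - q)) (p ^ 2) := by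
  have hu := leadingCoeff_ne_zero.mpr h.left_ne_zero
  have hv := leadingCoeff_ne_zero.mpr h.right_ne_zero
  have hdeg := h.natDegree_eq
  have hlc := h.leadingCoeff_ne
  suffices hlc' : ((p - X * q) * (p - q)).leadingCoeff ≠ 0 ∧
      ((p - X * q) * (p - q)).leadingCoeff ≠ p.leadingCoeff ^ 2 by
    refine ⟨leadingCoeff_ne_zero.mp hlc'.1, pow_ne_zero 2 h.left_ne_zero, ?_,
      by rw [leadingCoeff_pow]; exact hlc'.2⟩
    rw [natDegree_mul' (by rw [← leadingCoeff_mul]; exact hlc'.1), h.natDegree_sub_X_mul hε,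
      h.natDegree_sub hε, natDegree_pow]
    omega
  rw [leadingCoeff_mul, h.leadingCoeff_sub_X_mul hε, h.leadingCoeff_sub hε]
  obtain rfl | rfl : ε = 0 ∨ ε = 1 := by omega
  · rw [add_zero] at hdeg
    rw [coeff_eq_zero_of_natDegree_lt (by omega), hdeg, coeff_natDegree]
    refine ⟨mul_ne_zero (by simpa using hv) (sub_ne_zero.mpr hlc), fun h0 => ?_⟩
    exact sq_add_mul_sub_sq_ne_zero (u := p.leadingCoeff) hv (by linear_combination -h0)
  · rw [← hdeg, coeff_natDegree, coeff_eq_zero_of_natDegree_lt (by omega), sub_zero]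
    refine ⟨mul_ne_zero (sub_ne_zero.mpr hlc) hu, fun h0 => hv ?_⟩
    have := mul_right_cancel₀ hu (h0.trans (sq p.leadingCoeff))
    linear_combination -this

section Coprime

variable {K : Type*} [Field K]

theorem isCoprime_step {p q : K[X]} (hpq : IsCoprime p q) (hp : ¬X ∣ p) :
    IsCoprime ((p - X * q) * (p - q)) (p ^ 2) := by
  have hXp : IsCoprime X p := prime_X.coprime_iff_not_dvd.mpr hp
  have h₁ : IsCoprime (p - X * q) p := isCoprime_sub_left_self.mpr (hXp.mul_left hpq.symm)
  have h₂ : IsCoprime (p - q) p := isCoprime_sub_left_self.mpr hpq.symm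
  exact (h₁.mul_left h₂).pow_right

theorem isCoprime_step_of_X_mul {t q : K[X]} (htq : IsCoprime (X * t) q) (hX : ¬X ∣ t - q) :
    IsCoprime ((t - q) * (X * t - q)) (X * t ^ 2) := by
  have hXq : IsCoprime X q := htq.of_mul_left_left
  have htq : IsCoprime t q := htq.of_mul_left_right
  have h₁ : IsCoprime (t - q) (X * t ^ 2) :=
    ((prime_X.coprime_iff_not_dvd.mpr hX).symm).mul_right
      (isCoprime_sub_left_self.mpr htq.symm).pow_right
  have h₂ : IsCoprime (X * t - q) (X * t ^ 2) := by
    rw [← neg_sub, IsCoprime.neg_left_iff]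
    exact (IsCoprime.sub_mul_left_left_iff.mpr hXq.symm).mul_right
      (IsCoprime.sub_mul_right_left_iff.mpr htq.symm).pow_right
  exact h₁.mul_left h₂

end Coprime

section Jet

variable {K : Type*} [Field K]

/-- Near `a = 0`, `p / q` is `c a + O(a²)`, `1 / (c a) + O(1)` or `1 + c a + O(a²)` according as
the index is `0`, `1` or `2`, where `c ∉ {0, 1}`, `c ∉ {0, -1}` and `c ∉ {0, 1}` respectively. -/
def JetAtZero : ℕ → K[X] → K[X] → Prop
  | 0, p, q => p.coeff 0 = 0 ∧ p.coeff 1 ≠ 0 ∧ q.coeff 0 ≠ 0 ∧ p.coeff 1 ≠ q.coeff 0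
  | 1, p, q => q.coeff 0 = 0 ∧ q.coeff 1 ≠ 0 ∧ p.coeff 0 ≠ 0 ∧ q.coeff 1 + p.coeff 0 ≠ 0
  | _, p, q => p.coeff 0 = q.coeff 0 ∧ p.coeff 0 ≠ 0 ∧ p.coeff 1 - q.coeff 1 ≠ 0 ∧
      p.coeff 1 - q.coeff 1 ≠ p.coeff 0

theorem JetAtZero.step_one {p q : K[X]} (h : JetAtZero 1 p q) :
    JetAtZero 2 ((p - X * q) * (p - q)) (p ^ 2) := by
  obtain ⟨hq₀, hq₁, hp₀, hsum⟩ := h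
  have e₀ : ((p - X * q) * (p - q)).coeff 0 = p.coeff 0 ^ 2 := by
    simp only [mul_coeff_zero, coeff_sub, coeff_X_zero, hq₀, zero_mul, sub_zero, sq]
  have e₁ : ((p - X * q) * (p - q)).coeff 1 - (p ^ 2).coeff 1 = -(p.coeff 0 * q.coeff 1) := by
    simp only [sq, mul_coeff_one, mul_coeff_zero, coeff_sub, coeff_X_zero, coeff_X_one, hq₀]
    ring
  have hsq : (p ^ 2).coeff 0 = p.coeff 0 ^ 2 := by rw [sq, mul_coeff_zero, sq]
  refine ⟨e₀.trans hsq.symm, e₀ ▸ pow_ne_zero 2 hp₀, e₁ ▸ neg_ne_zero.mpr (mul_ne_zero hp₀ hq₁),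
    fun h => hsum (mul_left_cancel₀ hp₀ ?_)⟩
  rw [e₁, e₀] at h
  linear_combination -h

theorem JetAtZero.step_two {p q : K[X]} (h : JetAtZero 2 p q) :
    JetAtZero 0 ((p - X * q) * (p - q)) (p ^ 2) := by
  obtain ⟨h₀, hp₀, hk₀, hk₁⟩ := h
  have e₀ : ((p - X * q) * (p - q)).coeff 0 = 0 := by
    simp only [mul_coeff_zero, coeff_sub, coeff_X_zero, h₀, zero_mul, sub_zero, sub_self, mul_zero]
  have e₁ : ((p - X * q) * (p - q)).coeff 1 = p.coeff 0 * (p.coeff 1 - q.coeff 1) := by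
    simp only [mul_coeff_one, mul_coeff_zero, coeff_sub, coeff_X_zero, coeff_X_one, h₀]
    ring
  have hsq : (p ^ 2).coeff 0 = p.coeff 0 * p.coeff 0 := by rw [sq, mul_coeff_zero]
  refine ⟨e₀, e₁ ▸ mul_ne_zero hp₀ hk₀, hsq ▸ mul_ne_zero hp₀ hp₀, ?_⟩
  rw [e₁, hsq]
  exact fun h => hk₁ (mul_left_cancel₀ hp₀ h)

variable [LinearOrder K] [IsStrictOrderedRing K]

theorem sq_sub_mul_add_sq_ne_zero {u v : K} (hv : v ≠ 0) : u ^ 2 - u * v + v ^ 2 ≠ 0 := by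
  nlinarith [sq_nonneg (2 * u - v), sq_pos_of_ne_zero hv]

theorem JetAtZero.step_zero {t q : K[X]} (h : JetAtZero 0 (X * t) q) :
    JetAtZero 1 ((t - q) * (X * t - q)) (X * t ^ 2) := by
  obtain ⟨-, ht₀, hq₀, htq⟩ := h
  simp only [coeff_X_mul] at ht₀ htq
  have e₀ : ((t - q) * (X * t - q)).coeff 0 = -((t.coeff 0 - q.coeff 0) * q.coeff 0) := by
    simp only [mul_coeff_zero, coeff_sub, coeff_X_zero]
    ring
  have e₁ : (X * t ^ 2).coeff 1 = t.coeff 0 ^ 2 := by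
    rw [coeff_X_mul, sq, mul_coeff_zero, sq]
  refine ⟨coeff_X_mul_zero _, e₁ ▸ pow_ne_zero 2 ht₀,
    e₀ ▸ neg_ne_zero.mpr (mul_ne_zero (sub_ne_zero.mpr htq) hq₀), ?_⟩
  rw [e₀, e₁]
  exact fun h => sq_sub_mul_add_sq_ne_zero (u := t.coeff 0) hq₀ (by linear_combination h)

end Jet

theorem F_succ_of_mul_eq {m : ℕ} {p q p' q' : ℚ[X]} (hp : p ≠ 0) (hq : q ≠ 0) (hq' : q' ≠ 0)
    (hF : F m = algebraMap _ _ p / algebraMap _ _ q)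
    (h : (p - X * q) * (p - q) * q' = p' * p ^ 2) :
    F (m + 1) = algebraMap _ _ p' / algebraMap _ _ q' := by
  have hP := RatFunc.algebraMap_ne_zero hp
  have hQ := RatFunc.algebraMap_ne_zero hq
  have hQ' := RatFunc.algebraMap_ne_zero hq'
  rw [F, hF, ← RatFunc.algebraMap_X]
  field_simp
  have h' := congrArg (algebraMap ℚ[X] (RatFunc ℚ)) h
  simp only [map_mul, map_sub, map_pow] at h'
  linear_combination h'

/-- The value of `21 deg p_m - 23 * 2 ^ m`, which depends only on `m % 6`. -/
def degreeOffset (m : ℕ) : ℤ :=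
  match m % 6 with
  | 0 => -2 | 1 => -4 | 2 => -8 | 3 => 5 | 4 => -11 | _ => -1

theorem degreeOffset_succ (m : ℕ) :
    degreeOffset (m + 1) + (if m % 3 = 0 then 21 else 0) =
      2 * degreeOffset m + 21 * ((m + 1) % 2 : ℕ) := by
  have h₃ : m % 3 = m % 6 % 3 := by omega
  have h₂ : (m + 1) % 2 = (m % 6 + 1) % 2 := by omega
  have h₆ : (m + 1) % 6 = (m % 6 + 1) % 6 := by omega
  have := Nat.mod_lt m (by norm_num : 6 > 0)
  simp only [degreeOffset, h₃, h₂, h₆]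
  interval_cases m % 6 <;> rfl

theorem degreeOffset_add (m : ℕ) :
    degreeOffset m + 21 * ((m + 1) % 2 : ℕ) =
      if m % 6 = 0 then 19 else if m % 6 = 1 then -4 else if m % 6 = 2 then 13
        else if m % 6 = 3 then 5 else if m % 6 = 4 then 10 else -1 := by
  have h₂ : (m + 1) % 2 = (m % 6 + 1) % 2 := by omega
  have := Nat.mod_lt m (by norm_num : 6 > 0)
  simp only [degreeOffset, h₂]
  interval_cases m % 6 <;> rfl

structure IsReducedForm (m : ℕ) (p q : ℚ[X]) : Prop where
  eq_div : F m = algebraMap ℚ[X] (RatFunc ℚ) p / algebraMap _ _ q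
  isCoprime : IsCoprime p q
  shape : ShapeAtInfinity (m % 2) p q
  jet : JetAtZero (m % 3) p q
  natDegree_eq : 21 * (p.natDegree : ℤ) = 23 * 2 ^ m + degreeOffset m

theorem isReducedForm_zero : IsReducedForm 0 (2 * X) (X + 1) := by
  have hX1 : (X + 1 : ℚ[X]) = X + C 1 := by rw [C_1]
  have h2X : (2 * X : ℚ[X]) = C 2 * X := by rw [C_ofNat]
  refine ⟨?_, ?_, ⟨?_, ?_, ?_, ?_⟩, ?_, ?_⟩
  · rw [F, map_mul, map_add, RatFunc.algebraMap_X, map_ofNat, map_one]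
  · refine ⟨C (-1 / 2), 1, ?_⟩
    rw [h2X, ← mul_assoc, ← C_mul]
    norm_num
  · simp [h2X]
  · simp [hX1, X_add_C_ne_zero]
  · rw [h2X, hX1, natDegree_C_mul_X _ two_ne_zero, natDegree_X_add_C]
  · rw [h2X, hX1, leadingCoeff_C_mul_X, leadingCoeff_X_add_C]
    norm_num
  · simp [JetAtZero, hX1, coeff_X]
  · rw [h2X, natDegree_C_mul_X _ two_ne_zero]
    rfl

namespace IsReducedForm

variable {m : ℕ}

theorem succ_of_mod_three_ne_zero {p q : ℚ[X]} (h : IsReducedForm m p q) (hm : m % 3 ≠ 0) :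
    IsReducedForm (m + 1) ((p - X * q) * (p - q)) (p ^ 2) := by
  have hp := h.shape.left_ne_zero
  have hjet : p.coeff 0 ≠ 0 ∧ JetAtZero ((m + 1) % 3) ((p - X * q) * (p - q)) (p ^ 2) := by
    obtain h₃ | h₃ : m % 3 = 1 ∨ m % 3 = 2 := by omega
    · have hjet : JetAtZero 1 p q := h₃ ▸ h.jet
      rw [show (m + 1) % 3 = 2 by omega]
      exact ⟨hjet.2.2.1, hjet.step_one⟩
    · have hjet : JetAtZero 2 p q := h₃ ▸ h.jet
      rw [show (m + 1) % 3 = 0 by omega]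
      exact ⟨hjet.2.1, hjet.step_two⟩
  have hshape : ShapeAtInfinity ((m + 1) % 2) ((p - X * q) * (p - q)) (p ^ 2) := by
    rw [show (m + 1) % 2 = 1 - m % 2 by omega]
    exact h.shape.step (by omega)
  refine ⟨F_succ_of_mul_eq hp h.shape.right_ne_zero (pow_ne_zero 2 hp) h.eq_div (by ring),
    isCoprime_step h.isCoprime (by rw [X_dvd_iff]; exact hjet.1), hshape, hjet.2, ?_⟩
  have hoff := degreeOffset_succ m
  rw [if_neg hm] at hoff
  rw [hshape.natDegree_eq, natDegree_pow]
  push_cast at hoff ⊢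
  linear_combination 2 * h.natDegree_eq - hoff

theorem succ_of_mod_three_eq_zero {t q : ℚ[X]} (h : IsReducedForm m (X * t) q) (hm : m % 3 = 0) :
    IsReducedForm (m + 1) ((t - q) * (X * t - q)) (X * t ^ 2) := by
  have hjet : JetAtZero 0 (X * t) q := hm ▸ h.jet
  have hp := h.shape.left_ne_zero
  have ht : t ≠ 0 := right_ne_zero_of_mul hp
  have hshape : ShapeAtInfinity ((m + 1) % 2) ((t - q) * (X * t - q)) (X * t ^ 2) := by
    have := h.shape.step (by omega)
    rw [show (m + 1) % 2 = 1 - m % 2 by omega]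
    refine ShapeAtInfinity.of_X_mul ?_
    convert this using 1 <;> ring
  refine ⟨F_succ_of_mul_eq hp h.shape.right_ne_zero (mul_ne_zero X_ne_zero (pow_ne_zero 2 ht))
    h.eq_div (by ring), isCoprime_step_of_X_mul h.isCoprime ?_, hshape, ?_, ?_⟩
  · rw [X_dvd_iff, coeff_sub, sub_eq_zero]
    simpa using hjet.2.2.2
  · rw [show (m + 1) % 3 = 1 by omega]
    exact hjet.step_zero
  · have hoff := degreeOffset_succ m
    rw [if_pos hm] at hoff
    have := h.natDegree_eq
    rw [natDegree_X_mul ht] at this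
    rw [hshape.natDegree_eq, natDegree_X_mul (pow_ne_zero 2 ht), natDegree_pow]
    push_cast at this hoff ⊢
    linear_combination 2 * this - hoff

end IsReducedForm

theorem exists_isReducedForm (m : ℕ) : ∃ p q, IsReducedForm m p q := by
  induction m with
  | zero => exact ⟨_, _, isReducedForm_zero⟩
  | succ m ih =>
    obtain ⟨p, q, h⟩ := ih
    by_cases hm : m % 3 = 0
    · have hjet : JetAtZero 0 p q := hm ▸ h.jet
      obtain ⟨t, rfl⟩ := X_dvd_iff.mpr hjet.1
      exact ⟨_, _, h.succ_of_mod_three_eq_zero hm⟩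
    · exact ⟨_, _, h.succ_of_mod_three_ne_zero hm⟩

theorem degree_num_sub_X_mul_denom (m : ℕ) :
    21 * (((F m).num - Polynomial.X * (F m).denom).natDegree : ℤ) =
      23 * 2 ^ m +
        (if m % 6 = 0 then 19 else if m % 6 = 1 then -4 else if m % 6 = 2 then 13
          else if m % 6 = 3 then 5 else if m % 6 = 4 then 10 else -1) := by
  obtain ⟨p, q, h⟩ := exists_isReducedForm m
  obtain ⟨c, hc, hnum, hden⟩ :=
    RatFunc.exists_num_denom_eq_C_mul h.shape.right_ne_zero h.isCoprime
  have hsub : (F m).num - X * (F m).denom = C c * (p - X * q) := by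
    rw [h.eq_div, hnum, hden]
    ring
  have hdeg : ((F m).num - X * (F m).denom).natDegree = p.natDegree + (m + 1) % 2 := by
    rw [hsub, natDegree_C_mul hc, h.shape.natDegree_sub_X_mul (by omega), h.shape.natDegree_eq]
    omega
  rw [hdeg, ← degreeOffset_add]
  push_cast
  linear_combination h.natDegree_eq
end

section
/- For every m ≥ 1, 7·( ((A^(m−1)).mulVec ![0,0,1]) 1 + ((A^(m−1)).mulVec ![0,0,1]) 2 ) = 3·2^m + s(m), where s(m) = −3 if m ≡ 0 (mod 3), s(m) = 1 if m ≡ 1 (mod 3), and s(m) = 2 if m ≡ 2 (mod 3). -/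
/-!
The columns of `A` sum to `2` and its characteristic polynomial is `(X - 2) (X ^ 2 + X + 1)`,
so the coordinates of `A ^ n *ᵥ ![0, 0, 1]` are `2 ^ n / 7` plus a correction of period `3`
whose values over a period sum to `0` (the primitive cube roots of unity). Checking that the
resulting closed form is propagated by `A` gives it for all `n` by induction.
-/

def A : Matrix (Fin 3) (Fin 3) ℤ := !![0, 1, 0; 0, 0, 1; 2, 1, 1]

open Matrix

theorem Matrix.pow_mulVec_of_mulVec_eq {ι R : Type*} [Fintype ι] [DecidableEq ι] [Semiring R]
    (M : Matrix ι ι R) (w : ℕ → ι → R) (hw : ∀ k, M *ᵥ w k = w (k + 1)) (n : ℕ) :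
    M ^ n *ᵥ w 0 = w n := by
  induction n with
  | zero => simp
  | succ n ih => rw [pow_succ', ← Matrix.mulVec_mulVec, ih, hw]

theorem A_mulVec (v : Fin 3 → ℤ) : A *ᵥ v = ![v 1, v 2, 2 * v 0 + v 1 + v 2] := by
  ext i
  fin_cases i <;> simp [A, Matrix.mulVec, dotProduct, Fin.sum_univ_three]

def periodicPart (n : ℕ) : ℤ := if n % 3 = 0 then -1 else if n % 3 = 1 then -2 else 3

theorem periodicPart_add_three (n : ℕ) : periodicPart (n + 3) = periodicPart n := by
  unfold periodicPart; omega

theorem periodicPart_add_periodicPart_add_periodicPart (n : ℕ) :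
    periodicPart n + periodicPart (n + 1) + periodicPart (n + 2) = 0 := by
  unfold periodicPart; omega

/-- Seven times `A ^ n *ᵥ ![0, 0, 1]`. -/
def closedForm (n : ℕ) : Fin 3 → ℤ := fun i => 2 ^ (n + i) + periodicPart (n + i)

theorem A_mulVec_closedForm (n : ℕ) : A *ᵥ closedForm n = closedForm (n + 1) := by
  rw [A_mulVec]
  ext i
  fin_cases i
  · simp [closedForm]
  · simp [closedForm, add_assoc]
  · simp [closedForm, add_assoc]
    linear_combination periodicPart_add_periodicPart_add_periodicPart n -
      periodicPart_add_three n

theorem seven_smul_pow_mulVec (n : ℕ) : (7 : ℤ) • (A ^ n *ᵥ ![0, 0, 1]) = closedForm n := by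
  have h₀ : closedForm 0 = (7 : ℤ) • ![0, 0, 1] := by
    ext i; fin_cases i <;> simp [closedForm, periodicPart]
  rw [← Matrix.mulVec_smul, ← h₀]
  exact A.pow_mulVec_of_mulVec_eq closedForm A_mulVec_closedForm n

theorem count_s17 (m : ℕ) (hm : 1 ≤ m) :
    7 * (((A ^ (m - 1)).mulVec ![0, 0, 1]) 1 + ((A ^ (m - 1)).mulVec ![0, 0, 1]) 2) =
      3 * 2 ^ m + (if m % 3 = 0 then -3 else if m % 3 = 1 then 1 else 2) := by
  obtain ⟨n, rfl⟩ : ∃ n, m = n + 1 := ⟨m - 1, by omega⟩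
  have h := seven_smul_pow_mulVec n
  have h₁ := congrFun h 1
  have h₂ := congrFun h 2
  simp only [Pi.smul_apply, smul_eq_mul, closedForm, Fin.val_one, Fin.val_two] at h₁ h₂
  have hp : periodicPart (n + 1) + periodicPart (n + 2) =
      if (n + 1) % 3 = 0 then -3 else if (n + 1) % 3 = 1 then 1 else 2 := by
    unfold periodicPart; omega
  rw [Nat.add_sub_cancel, mul_add, h₁, h₂, ← hp]
  ring
end

section
/- For every m ≥ 1, 7·((B^(m−1)).mulVec ![0,0,0,1]) 3 = 2^m + t(m), where t(m) = −1 if m ≡ 0 (mod 3), t(m) = 5 if m ≡ 1 (mod 3), and t(m) = 3 if m ≡ 2 (mod 3). -/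
/-!
`7 e₃ = u + w` with `u = (1, 2, 2, 2)` an eigenvector of `B` for the eigenvalue `2` and
`w = (-1, -2, -2, 5)` fixed by `B³`. Hence `7 B^k e₃ = 2^k u + B^(k mod 3) w`, and the third
coordinate of `B^r w` for `r = 0, 1, 2` gives the periodic correction `t`.
-/

def B : Matrix (Fin 4) (Fin 4) ℤ :=
  !![0, 0, 0, 1; 0, 1, 1, 0; 2, 1, 0, 0; 0, 0, 1, 1]

namespace Matrix

variable {n R : Type*} [Fintype n] [DecidableEq n] [CommSemiring R]

theorem pow_mulVec_of_mulVec_eq_smul {A : Matrix n n R} {v : n → R} {c : R}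
    (h : A *ᵥ v = c • v) (k : ℕ) : A ^ k *ᵥ v = c ^ k • v := by
  induction k with
  | zero => simp
  | succ k ih => rw [pow_succ', ← mulVec_mulVec, ih, mulVec_smul, h, smul_smul, pow_succ]

theorem pow_mulVec_eq_pow_mod_mulVec {A : Matrix n n R} {v : n → R} {p : ℕ}
    (h : A ^ p *ᵥ v = v) (k : ℕ) : A ^ k *ᵥ v = A ^ (k % p) *ᵥ v := by
  have hp : A ^ p *ᵥ v = (1 : R) • v := by rw [h, one_smul]
  conv_lhs => rw [← Nat.mod_add_div k p, pow_add, ← mulVec_mulVec, pow_mul,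
    pow_mulVec_of_mulVec_eq_smul hp, one_pow, one_smul]

end Matrix

open Matrix

theorem B_mulVec_eigenvector : B *ᵥ ![1, 2, 2, 2] = (2 : ℤ) • ![1, 2, 2, 2] := by
  decide

theorem B_pow_three_mulVec : B ^ 3 *ᵥ ![-1, -2, -2, 5] = ![-1, -2, -2, 5] := by
  decide

theorem seven_smul_B_pow_mulVec (k : ℕ) :
    (7 : ℤ) • (B ^ k *ᵥ ![0, 0, 0, 1]) =
      (2 : ℤ) ^ k • ![1, 2, 2, 2] + B ^ (k % 3) *ᵥ ![-1, -2, -2, 5] := by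
  have hsplit : (7 : ℤ) • ![0, 0, 0, 1] = ![1, 2, 2, 2] + ![-1, -2, -2, 5] := by decide
  rw [← mulVec_smul, hsplit, mulVec_add, pow_mulVec_of_mulVec_eq_smul B_mulVec_eigenvector,
    pow_mulVec_eq_pow_mod_mulVec B_pow_three_mulVec]

theorem count_s37_sv1 (m : ℕ) (hm : 1 ≤ m) :
    7 * ((B ^ (m - 1)).mulVec ![0, 0, 0, 1]) 3 =
      2 ^ m + (if m % 3 = 0 then -1 else if m % 3 = 1 then 5 else 3) := by
  obtain ⟨k, rfl⟩ : ∃ k, m = k + 1 := ⟨m - 1, by omega⟩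
  have h3 := congrFun (seven_smul_B_pow_mulVec k) 3
  simp only [Pi.smul_apply, smul_eq_mul, Pi.add_apply] at h3
  rw [Nat.add_sub_cancel, h3, pow_succ, Nat.add_mod]
  have hk : k % 3 < 3 := Nat.mod_lt k (by norm_num)
  interval_cases k % 3 <;> exact congrArg (2 ^ k * 2 + ·) (by decide)
end

section
/- For every m ≥ 1, 7·((B^(m−1)).mulVec ![0,1,0,0]) 3 = 2^m + u(m), where u(m) = −1 if m ≡ 0 (mod 3), u(m) = −2 if m ≡ 1 (mod 3), and u(m) = −4 if m ≡ 2 (mod 3). -/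
open Matrix

theorem Matrix.pow_mulVec_of_mulVec_eq_smul_s10 {n R : Type*} [Fintype n] [DecidableEq n]
    [CommSemiring R] {A : Matrix n n R} {v : n → R} {c : R} (h : A *ᵥ v = c • v) (k : ℕ) :
    A ^ k *ᵥ v = c ^ k • v := by
  induction k with
  | zero => simp
  | succ k ih => rw [pow_succ', ← mulVec_mulVec, ih, mulVec_smul, h, smul_smul, pow_succ]

theorem Matrix.pow_mulVec_eq_pow_mod_mulVec_s10 {n R : Type*} [Fintype n] [DecidableEq n]
    [CommSemiring R] {A : Matrix n n R} {v : n → R} {p : ℕ} (h : A ^ p *ᵥ v = v) (k : ℕ) :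
    A ^ k *ᵥ v = A ^ (k % p) *ᵥ v := by
  have hfix : (A ^ p) ^ (k / p) *ᵥ v = v := by
    simpa using pow_mulVec_of_mulVec_eq_smul_s10 (c := (1 : R)) (by simpa using h) (k / p)
  conv_lhs => rw [← Nat.mod_add_div k p, pow_add, pow_mul, ← mulVec_mulVec, hfix]

def perronVec : Fin 4 → ℤ := ![1, 2, 2, 2]

def periodicVec : Fin 4 → ℤ := ![-1, 5, -2, -2]

theorem B_mulVec_perronVec : B *ᵥ perronVec = (2 : ℤ) • perronVec := by decide

theorem B_pow_three_mulVec_periodicVec : B ^ 3 *ᵥ periodicVec = periodicVec := by decide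

theorem perronVec_add_periodicVec : perronVec + periodicVec = (7 : ℤ) • ![0, 1, 0, 0] := by
  decide

theorem B_pow_mulVec_periodicVec_apply_three {r : ℕ} (hr : r < 3) :
    (B ^ r *ᵥ periodicVec) 3 =
      if (r + 1) % 3 = 0 then -1 else if (r + 1) % 3 = 1 then -2 else -4 := by
  interval_cases r <;> decide

theorem count_s37_c1 (m : ℕ) (hm : 1 ≤ m) :
    7 * ((B ^ (m - 1)).mulVec ![0, 1, 0, 0]) 3 =
      2 ^ m + (if m % 3 = 0 then -1 else if m % 3 = 1 then -2 else -4) := by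
  obtain ⟨k, rfl⟩ : ∃ k, m = k + 1 := ⟨m - 1, by omega⟩
  have hsplit : 7 * (B ^ k *ᵥ ![0, 1, 0, 0]) 3
      = 2 ^ k * perronVec 3 + (B ^ (k % 3) *ᵥ periodicVec) 3 := by
    rw [← smul_eq_mul, ← Pi.smul_apply, ← mulVec_smul, ← perronVec_add_periodicVec, mulVec_add,
      pow_mulVec_of_mulVec_eq_smul_s10 B_mulVec_perronVec,
      pow_mulVec_eq_pow_mod_mulVec_s10 B_pow_three_mulVec_periodicVec]
    simp only [Pi.add_apply, Pi.smul_apply, smul_eq_mul]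
  rw [Nat.add_sub_cancel, hsplit, B_pow_mulVec_periodicVec_apply_three (Nat.mod_lt k (by norm_num)),
    Nat.mod_add_mod]
  simp [perronVec, pow_succ]
end

section
/- For every m ≥ 1, 2·( ((A^(m−1)).mulVec ![0,0,1]) 1 + ((A^(m−1)).mulVec ![0,0,1]) 2 ) + ((B^(m−1)).mulVec ![0,0,0,1]) 3 = 2^m + ε(m), where ε(m) = −1 if m ≡ 0 (mod 3) and ε(m) = 1 otherwise. -/
open Polynomial Matrix

namespace LinearRecurrence

variable {R : Type*} [CommRing R] (E : LinearRecurrence R)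

theorem pow_order_eq_sum_of_aeval_charPoly_eq_zero {S : Type*} [Ring S] [Algebra R S] {a : S}
    (ha : aeval a E.charPoly = 0) : a ^ E.order = ∑ i, E.coeffs i • a ^ (i : ℕ) := by
  simpa [charPoly, sub_eq_zero, aeval_monomial, Algebra.smul_def] using ha

theorem isSolution_pow_mulVec_apply {ι : Type*} [Fintype ι] [DecidableEq ι] {M : Matrix ι ι R}
    (hM : aeval M E.charPoly = 0) (v : ι → R) (j : ι) :
    E.IsSolution fun n ↦ (M ^ n *ᵥ v) j := by
  intro n
  simp only [pow_add, E.pow_order_eq_sum_of_aeval_charPoly_eq_zero hM, Finset.mul_sum,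
    mul_smul_comm, sum_mulVec, smul_mulVec, Finset.sum_apply, Pi.smul_apply, smul_eq_mul]

end LinearRecurrence

def powTwoPeriodThree : LinearRecurrence ℤ := ⟨4, ![-2, 1, 0, 2]⟩

namespace powTwoPeriodThree

theorem isSolution_iff {u : ℕ → ℤ} :
    powTwoPeriodThree.IsSolution u ↔ ∀ n, u (n + 4) = 2 * u (n + 3) + u (n + 1) - 2 * u n := by
  refine forall_congr' fun n ↦ ?_
  show u (n + 4) = ∑ i : Fin 4, ![-2, 1, 0, 2] i * u (n + i) ↔ _
  simp [Fin.sum_univ_four]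
  ring_nf

theorem charPoly_eq : powTwoPeriodThree.charPoly = (X - 2) * (X ^ 3 - 1) := by
  show monomial 4 1 - ∑ i : Fin 4, monomial i (![-2, 1, 0, 2] i) = _
  simp [Fin.sum_univ_four, ← C_mul_X_pow_eq_monomial]
  ring

theorem isSolution_two_pow : powTwoPeriodThree.IsSolution (2 ^ ·) :=
  (powTwoPeriodThree.geom_sol_iff_root_charPoly 2).2 <| by simp [charPoly_eq]

theorem isSolution_of_periodic {u : ℕ → ℤ} (hu : Function.Periodic u 3) :
    powTwoPeriodThree.IsSolution u :=
  isSolution_iff.2 fun n ↦ by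
    rw [show n + 4 = n + 1 + 3 by ring, hu, hu n]
    ring

theorem aeval_A_charPoly : aeval A powTwoPeriodThree.charPoly = 0 := by
  simp only [charPoly_eq, map_mul, map_sub, map_pow, aeval_X, map_ofNat, map_one]
  decide

theorem aeval_B_charPoly : aeval B powTwoPeriodThree.charPoly = 0 := by
  simp only [charPoly_eq, map_mul, map_sub, map_pow, aeval_X, map_ofNat, map_one]
  decide

theorem isSolution_total_count : powTwoPeriodThree.IsSolution fun n ↦
    2 * ((A ^ n *ᵥ ![0, 0, 1]) 1 + (A ^ n *ᵥ ![0, 0, 1]) 2) + (B ^ n *ᵥ ![0, 0, 0, 1]) 3 := by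
  have hA := powTwoPeriodThree.isSolution_pow_mulVec_apply aeval_A_charPoly ![0, 0, 1]
  have hB := powTwoPeriodThree.isSolution_pow_mulVec_apply aeval_B_charPoly ![0, 0, 0, 1] 3
  refine isSolution_iff.2 fun n ↦ ?_
  linear_combination 2 * isSolution_iff.1 (hA 1) n + 2 * isSolution_iff.1 (hA 2) n +
    isSolution_iff.1 hB n

theorem isSolution_closed_form : powTwoPeriodThree.IsSolution fun n ↦
    2 ^ (n + 1) + if (n + 1) % 3 = 0 then -1 else 1 := by
  have hε : Function.Periodic (fun n : ℕ ↦ if (n + 1) % 3 = 0 then (-1 : ℤ) else 1) 3 :=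
    fun n ↦ by simp only [show (n + 3 + 1) % 3 = (n + 1) % 3 by omega]
  refine isSolution_iff.2 fun n ↦ ?_
  linear_combination 2 * isSolution_iff.1 isSolution_two_pow n +
    isSolution_iff.1 (isSolution_of_periodic hε) n

end powTwoPeriodThree

theorem total_count_sv1_easy (m : ℕ) (hm : 1 ≤ m) :
    2 * (((A ^ (m - 1)).mulVec ![0, 0, 1]) 1 + ((A ^ (m - 1)).mulVec ![0, 0, 1]) 2) +
        ((B ^ (m - 1)).mulVec ![0, 0, 0, 1]) 3 =
      2 ^ m + (if m % 3 = 0 then -1 else 1) := by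
  obtain ⟨n, rfl⟩ : ∃ n, m = n + 1 := ⟨m - 1, by omega⟩
  have h := (powTwoPeriodThree.eq_iff_eqOn_range_order _ _ powTwoPeriodThree.isSolution_total_count
    powTwoPeriodThree.isSolution_closed_form).2 fun k hk ↦ by
      obtain hk : k < 4 := Finset.mem_range.1 hk
      interval_cases k <;> decide
  simpa using congrFun h n
end

section
/- For every m ≥ 1, 2·( ((A^(m−1)).mulVec ![0,0,1]) 1 + ((A^(m−1)).mulVec ![0,0,1]) 2 ) + ((B^(m−1)).mulVec ![0,1,0,0]) 3 = 2^m + ε'(m), where ε'(m) = −1 if m ≡ 0 (mod 3) and ε'(m) = 0 otherwise. -/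
/-! Both `A` and `B` are annihilated by `(X - 2) * (X ^ 3 - 1)`, so every entry of `A ^ n *ᵥ v`
and of `B ^ n *ᵥ w` solves the order-four linear recurrence with this characteristic polynomial.
So does the right-hand side, being a multiple of `2 ^ n` plus a `3`-periodic sequence, and two
solutions that agree at `n = 0, 1, 2, 3` agree everywhere. -/

open Polynomial Matrix

namespace LinearRecurrence

variable {R : Type*} [CommRing R] (E : LinearRecurrence R)

theorem pow_add_order_of_aeval_charPoly_eq_zero {S : Type*} [Ring S] [Algebra R S] {x : S}
    (hx : aeval x E.charPoly = 0) (n : ℕ) :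
    x ^ (n + E.order) = ∑ i, E.coeffs i • x ^ (n + i) := by
  simp only [charPoly, map_sub, map_sum, aeval_monomial, map_one, one_mul, sub_eq_zero,
    Algebra.algebraMap_eq_smul_one, smul_mul_assoc] at hx
  simp only [pow_add, hx, Finset.mul_sum, mul_smul_comm]

theorem isSolution_mulVec_pow_apply {ι : Type*} [Fintype ι] [DecidableEq ι] {M : Matrix ι ι R}
    (hM : aeval M E.charPoly = 0) (v : ι → R) (i : ι) :
    E.IsSolution fun n ↦ (M ^ n *ᵥ v) i := by
  intro n
  simp only [E.pow_add_order_of_aeval_charPoly_eq_zero hM n, sum_mulVec, smul_mulVec,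
    Finset.sum_apply, Pi.smul_apply, smul_eq_mul]

end LinearRecurrence

open LinearRecurrence

def periodThreeDoubling : LinearRecurrence ℤ := ⟨4, ![-2, 1, 0, 2]⟩

namespace periodThreeDoubling

theorem charPoly_eq : periodThreeDoubling.charPoly = (X - 2) * (X ^ 3 - 1) := by
  dsimp only [charPoly, periodThreeDoubling]
  rw [Fin.sum_univ_four]
  simp only [← C_mul_X_pow_eq_monomial, eq_intCast, Fin.coe_ofNat_eq_mod, Nat.reduceMod, cons_val,
    Int.cast_neg, Int.cast_ofNat, Int.cast_one, Int.cast_zero]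
  ring

theorem isSolution_two_pow : periodThreeDoubling.IsSolution fun n ↦ 2 ^ n := by
  simp [geom_sol_iff_root_charPoly, charPoly_eq]

theorem isSolution_of_periodic {u : ℕ → ℤ} (hu : Function.Periodic u 3) :
    periodThreeDoubling.IsSolution u := by
  intro n
  have h₄ : u (n + 4) = u (n + 1) := hu (n + 1)
  have h₃ : u (n + 3) = u n := hu n
  show u (n + 4) = ∑ i : Fin 4, ![-2, 1, 0, 2] i * u (n + i)
  simp [Fin.sum_univ_four, h₄, h₃]

theorem aeval_A : aeval A periodThreeDoubling.charPoly = 0 := by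
  simp only [charPoly_eq, map_mul, map_sub, map_pow, aeval_X, map_ofNat, map_one]
  decide

theorem aeval_B : aeval B periodThreeDoubling.charPoly = 0 := by
  simp only [charPoly_eq, map_mul, map_sub, map_pow, aeval_X, map_ofNat, map_one]
  decide

end periodThreeDoubling

open periodThreeDoubling

theorem isSolution_totalCount : periodThreeDoubling.IsSolution fun n ↦
    2 * ((A ^ n *ᵥ ![0, 0, 1]) 1 + (A ^ n *ᵥ ![0, 0, 1]) 2) + (B ^ n *ᵥ ![0, 1, 0, 0]) 3 := by
  have hA (i) := (is_sol_iff_mem_solSpace _ _).1 <|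
    periodThreeDoubling.isSolution_mulVec_pow_apply aeval_A ![0, 0, 1] i
  have hB (i) := (is_sol_iff_mem_solSpace _ _).1 <|
    periodThreeDoubling.isSolution_mulVec_pow_apply aeval_B ![0, 1, 0, 0] i
  exact (is_sol_iff_mem_solSpace _ _).2 <|
    add_mem (Submodule.smul_mem _ 2 (add_mem (hA 1) (hA 2))) (hB 3)

theorem isSolution_closedForm : periodThreeDoubling.IsSolution fun n ↦
    2 ^ (n + 1) + if (n + 1) % 3 = 0 then -1 else 0 := by
  have h₂ := (is_sol_iff_mem_solSpace _ _).1 isSolution_two_pow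
  have hε := (is_sol_iff_mem_solSpace _ _).1 <| isSolution_of_periodic
    (u := fun n ↦ if (n + 1) % 3 = 0 then -1 else 0) fun n ↦ by
      simp only [show (n + 3 + 1) % 3 = (n + 1) % 3 by omega]
  convert (is_sol_iff_mem_solSpace _ _).2 (add_mem (Submodule.smul_mem _ 2 h₂) hε) using 2 with n
  simp [pow_succ, mul_comm]

theorem total_count_c1_easy (m : ℕ) (hm : 1 ≤ m) :
    2 * (((A ^ (m - 1)).mulVec ![0, 0, 1]) 1 + ((A ^ (m - 1)).mulVec ![0, 0, 1]) 2) +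
        ((B ^ (m - 1)).mulVec ![0, 1, 0, 0]) 3 =
      2 ^ m + (if m % 3 = 0 then -1 else 0) := by
  obtain ⟨n, rfl⟩ := Nat.exists_eq_add_of_le' hm
  refine congrFun ((periodThreeDoubling.eq_iff_eqOn_range_order _ _
    isSolution_totalCount isSolution_closedForm).2 fun k hk ↦ ?_) n
  simp only [periodThreeDoubling, Finset.coe_range, Set.mem_Iio] at hk
  interval_cases k <;> decide
end

section
/- For every n ≥ 2 and for each of the two vectors v = ![0,0,0,1] and v = ![0,1,0,0] in Fin 4 → ℤ: ((B^n).mulVec v) 2 + ((B^n).mulVec v) 3 − ((B^(n−2)).mulVec v) 3 = 2^(n−1). -/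
/-!
Every column of `B` sums to `2`, i.e. the all-ones row vector is a left eigenvector with
eigenvalue `2`, so the entry sum of `B ^ k *ᵥ v` is `2 ^ k` times that of `v`. For `w = B *ᵥ u`,
entries `2` and `3` of `B *ᵥ w` are `2 * w 0 + w 1` and `w 2 + w 3`, and `w 0 = u 3`; so
subtracting `u 3` leaves the entry sum of `w`. With `u = B ^ (n - 2) *ᵥ v`, and entry sum `1`
for both vectors `v`, this is `2 ^ (n - 1)`.
-/

open Matrix

theorem Matrix.dotProduct_pow_mulVec_of_vecMul_eq_smul {ι R : Type*} [Fintype ι] [DecidableEq ι]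
    [CommSemiring R] {M : Matrix ι ι R} {w : ι → R} {s : R} (hw : w ᵥ* M = s • w)
    (v : ι → R) (k : ℕ) : w ⬝ᵥ (M ^ k *ᵥ v) = s ^ k * (w ⬝ᵥ v) := by
  induction k with
  | zero => simp
  | succ k ih =>
    rw [pow_succ', ← mulVec_mulVec, dotProduct_mulVec, hw, smul_dotProduct, ih, smul_eq_mul,
      pow_succ', mul_assoc]

lemma one_vecMul_B : 1 ᵥ* B = (2 : ℤ) • 1 := by
  ext j
  fin_cases j <;> rfl

lemma B_mulVec (u : Fin 4 → ℤ) : B *ᵥ u = ![u 3, u 1 + u 2, 2 * u 0 + u 1, u 2 + u 3] := by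
  ext i
  fin_cases i <;> simp [B, mulVec, dotProduct, Fin.sum_univ_four]

lemma sum_B_pow_mulVec (v : Fin 4 → ℤ) (k : ℕ) : ∑ i, (B ^ k *ᵥ v) i = 2 ^ k * ∑ i, v i := by
  simpa only [one_dotProduct] using dotProduct_pow_mulVec_of_vecMul_eq_smul one_vecMul_B v k

lemma B_mulVec_B_mulVec_two_add_three_sub (u : Fin 4 → ℤ) :
    (B *ᵥ (B *ᵥ u)) 2 + (B *ᵥ (B *ᵥ u)) 3 - u 3 = ∑ i, (B *ᵥ u) i := by
  simp only [B_mulVec, Fin.isValue, cons_val, cons_val_one, cons_val_zero, Fin.sum_univ_four]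
  ring

lemma B_pow_mulVec_two_add_three_sub (v : Fin 4 → ℤ) (m : ℕ) :
    (B ^ (m + 2) *ᵥ v) 2 + (B ^ (m + 2) *ᵥ v) 3 - (B ^ m *ᵥ v) 3 = 2 ^ (m + 1) * ∑ i, v i := by
  have hstep : B ^ (m + 2) *ᵥ v = B *ᵥ (B *ᵥ (B ^ m *ᵥ v)) := by
    simp only [mulVec_mulVec, ← pow_succ']
  rw [hstep, B_mulVec_B_mulVec_two_add_three_sub, mulVec_mulVec, ← pow_succ', sum_B_pow_mulVec]

theorem e_add_d_sub_e (n : ℕ) (hn : 2 ≤ n) :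
    (((B ^ n).mulVec ![0, 0, 0, 1]) 2 + ((B ^ n).mulVec ![0, 0, 0, 1]) 3 -
        ((B ^ (n - 2)).mulVec ![0, 0, 0, 1]) 3 = 2 ^ (n - 1)) ∧
    (((B ^ n).mulVec ![0, 1, 0, 0]) 2 + ((B ^ n).mulVec ![0, 1, 0, 0]) 3 -
        ((B ^ (n - 2)).mulVec ![0, 1, 0, 0]) 3 = 2 ^ (n - 1)) := by
  obtain ⟨m, rfl⟩ := Nat.exists_eq_add_of_le' hn
  simp only [Nat.add_sub_cancel, show m + 2 - 1 = m + 1 by omega]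
  constructor <;> simp [B_pow_mulVec_two_add_three_sub, Fin.sum_univ_four]
end

section
/- Define g : ℕ → ℤ by g m = 0 for m ≤ 2, g 3 = 1, and g m = 2^(m−4) for m ≥ 4, and define f : ℕ → ℤ by f m = ∑_{k=0}^{⌊m/3⌋} g (m − 3k). Then for every m ≥ 1, 14·f m = 2^m + w(m), where w(m) = 6 if m ≡ 0 (mod 3), w(m) = −2 if m ≡ 1 (mod 3), and w(m) = −4 if m ≡ 2 (mod 3). -/
/-!
Adding three to `m` adds the single term `g (m + 3) = 2 ^ (m - 1)` to `f m`, and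
`14 * 2 ^ (m - 1) = 2 ^ (m + 3) - 2 ^ m`. Hence `14 * f m - 2 ^ m` is `3`-periodic for `m ≥ 1`,
and its values at `m = 1, 2, 3` are `-2, -4, 6`.
-/

def g (m : ℕ) : ℤ :=
  if m ≤ 2 then 0 else if m = 3 then 1 else 2 ^ (m - 4)

def f (m : ℕ) : ℤ :=
  ∑ k ∈ Finset.range (m / 3 + 1), g (m - 3 * k)

lemma g_add_four (n : ℕ) : g (n + 4) = 2 ^ n := by
  simp [g]

lemma f_add_three (m : ℕ) : f (m + 3) = f m + g (m + 3) := by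
  have hdiv : (m + 3) / 3 = m / 3 + 1 := by omega
  have hsub : ∀ k, m + 3 - 3 * (k + 1) = m - 3 * k := fun k => by omega
  simp only [f, hdiv, Finset.sum_range_succ' _ (m / 3 + 1), hsub, Nat.mul_zero, Nat.sub_zero]

lemma fourteen_mul_f_sub_pow_add_four (n : ℕ) :
    14 * f (n + 4) - 2 ^ (n + 4) = 14 * f (n + 1) - 2 ^ (n + 1) := by
  rw [f_add_three (n + 1), g_add_four]
  ring

theorem count_f_m0_sv1 (m : ℕ) (hm : 1 ≤ m) :
    14 * f m =
      2 ^ m + (if m % 3 = 0 then 6 else if m % 3 = 1 then -2 else -4) := by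
  induction m using Nat.strong_induction_on with
  | _ m ih =>
    match m, hm with
    | 1, _ | 2, _ | 3, _ => norm_num [f, g, Finset.sum_range_succ]
    | n + 4, _ =>
      have hprev := ih (n + 1) (by omega) (by omega)
      rw [show (n + 4) % 3 = (n + 1) % 3 by omega]
      linarith [fourteen_mul_f_sub_pow_add_four n]
end
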